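/- arXiv:1812.10058 — 4 statements merged into one kernel-verified Lean document; each statement's English description precedes it below -/
import Mathlib

section
/- Let A = {a_1,...,a_n} be a point configuration in ℚ^d affinely spanning ℚ^d, and G = {g_1,...,g_n} its Gale transform. For a subset I ⊆ {1,...,n}, the points {a_i : i ∈ I} lie in a common face of the convex hull conv(A) if and only if 0 ∈ conv{g_j : j ∉ I}. -/
/-- A vector configuration is *positively 2-spanning* if for every linear hyperplane
(kernel of a nonzero linear functional), each of the two open halfspaces contains at
least 2 vectors of the configuration (counted with multiplicity, i.e. indices). -/
def Pos2Span {ι V : Type*} [AddCommGroup V] [Module ℚ V] (w : ι → V) : Prop :=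
  ∀ f : V →ₗ[ℚ] ℚ, f ≠ 0 →
    (∃ i j : ι, i ≠ j ∧ 0 < f (w i) ∧ 0 < f (w j)) ∧
    (∃ i j : ι, i ≠ j ∧ f (w i) < 0 ∧ f (w j) < 0)

/-- `g` is a Gale transform of the point configuration `a`: the rows of the matrix `B`
(whose columns are the `g i`) are linearly independent, there are `n - d - 1` of them,
and they are orthogonal to the rows of the matrix `Ã` whose columns are `(a i, 1)`. -/
def IsGale {n d m : ℕ} (a : Fin n → Fin d → ℚ) (g : Fin n → Fin m → ℚ) : Prop :=
  m + (d + 1) = n ∧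
  LinearIndependent ℚ (fun k : Fin m => fun i : Fin n => g i k) ∧
  (∀ k : Fin m, ∑ i, g i k = 0) ∧
  (∀ k : Fin m, ∀ j : Fin d, ∑ i, a i j * g i k = 0)


/-!
Evaluating an affine function `f` on the configuration gives the vector `(f (a i))ᵢ` of the row
space of `Ã`, and the Gale condition makes this row space exactly the space of linear dependences
`∑ λᵢ gᵢ = 0`: it lies inside, and both have dimension `d + 1` because `f ↦ (f (a i))ᵢ` is
injective when `A` affinely spans. So affine functions nonnegative on `A`, positive somewhere and
vanishing on `I` are the same as nonnegative nonzero dependences of `G` supported off `I`, which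
after normalisation are the witnesses of `0 ∈ conv {g j | j ∉ I}`.
-/

open Finset Module

section ConvexHull

variable {𝕜 E ι : Type*} [Field 𝕜] [LinearOrder 𝕜] [IsStrictOrderedRing 𝕜]
  [AddCommGroup E] [Module 𝕜 E] [Fintype ι] {v : ι → E} {s : Set ι}

theorem mem_convexHull_image_iff {x : E} :
    x ∈ convexHull 𝕜 (v '' s) ↔
      ∃ w : ι → 𝕜, (∀ i, 0 ≤ w i) ∧ (∀ i ∉ s, w i = 0) ∧ ∑ i, w i = 1 ∧
        ∑ i, w i • v i = x := by
  classical
  constructor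
  · refine fun hx => convexHull_min (t := {y | ∃ w : ι → 𝕜, (∀ i, 0 ≤ w i) ∧
      (∀ i ∉ s, w i = 0) ∧ ∑ i, w i = 1 ∧ ∑ i, w i • v i = y}) ?_ ?_ hx
    · rintro _ ⟨i, hi, rfl⟩
      refine ⟨Pi.single i 1, fun j => ?_, fun j hj => ?_, by simp, by simp [Pi.single_apply]⟩
      · by_cases hj : j = i <;> simp [hj]
      · exact Pi.single_eq_of_ne (by rintro rfl; exact hj hi) _
    · rintro _ ⟨w, hw₀, hws, hw₁, rfl⟩ _ ⟨w', hw₀', hws', hw₁', rfl⟩ b b' hb hb' hbb'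
      refine ⟨b • w + b' • w', fun i => ?_, fun i hi => ?_, ?_, ?_⟩
      · simp only [Pi.add_apply, Pi.smul_apply, smul_eq_mul]
        exact add_nonneg (mul_nonneg hb (hw₀ i)) (mul_nonneg hb' (hw₀' i))
      · simp [hws i hi, hws' i hi]
      · simp [sum_add_distrib, ← mul_sum, hw₁, hw₁', hbb']
      · simp [add_smul, mul_smul, sum_add_distrib, ← smul_sum]
  · rintro ⟨w, hw₀, hws, hw₁, rfl⟩
    have hsupp : ∀ i ∈ univ, i ∉ univ.filter (· ∈ s) → w i = 0 := fun i _ hi =>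
      hws i fun his => hi (mem_filter.2 ⟨mem_univ i, his⟩)
    rw [← sum_subset (filter_subset _ _) fun i hi hi' => by rw [hsupp i hi hi', zero_smul]]
    refine (convex_convexHull 𝕜 _).sum_mem (fun i _ => hw₀ i) ?_ fun i hi =>
      subset_convexHull 𝕜 _ ⟨i, (mem_filter.1 hi).2, rfl⟩
    rwa [sum_subset (filter_subset _ _) hsupp]

theorem zero_mem_convexHull_image_iff :
    (0 : E) ∈ convexHull 𝕜 (v '' s) ↔
      ∃ w : ι → 𝕜, (∀ i, 0 ≤ w i) ∧ (∃ i, 0 < w i) ∧ (∀ i ∉ s, w i = 0) ∧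
        ∑ i, w i • v i = 0 := by
  rw [mem_convexHull_image_iff]
  constructor
  · rintro ⟨w, hw₀, hws, hw₁, hwv⟩
    obtain ⟨i, -, hi⟩ := (sum_pos_iff_of_nonneg fun i _ => hw₀ i).1 (hw₁ ▸ one_pos)
    exact ⟨w, hw₀, ⟨i, hi⟩, hws, hwv⟩
  · rintro ⟨w, hw₀, ⟨i, hi⟩, hws, hwv⟩
    have hpos : 0 < ∑ i, w i := (sum_pos_iff_of_nonneg fun i _ => hw₀ i).2 ⟨i, mem_univ i, hi⟩
    refine ⟨(∑ i, w i)⁻¹ • w, fun j => smul_nonneg (inv_nonneg.2 hpos.le) (hw₀ j),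
      fun j hj => by simp [hws j hj], ?_, ?_⟩
    · simp [← mul_sum, hpos.ne']
    · simp [mul_smul, ← smul_sum, hwv]

end ConvexHull

namespace AffineMap

variable (k : Type*) {V P ι : Type*} [Field k] [AddCommGroup V] [Module k V] [AddTorsor V P]

def evalFamilyₗ (p : ι → P) : (P →ᵃ[k] k) →ₗ[k] (ι → k) where
  toFun f i := f (p i)
  map_add' _ _ := rfl
  map_smul' _ _ := rfl

variable {k} {p : ι → P}

theorem evalFamilyₗ_injective (hp : affineSpan k (Set.range p) = ⊤) :
    Function.Injective (evalFamilyₗ k p) := fun f f' h =>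
  ext_on hp (by rintro _ ⟨i, rfl⟩; exact congrFun h i)

theorem finrank_range_evalFamilyₗ [FiniteDimensional k V]
    (hp : affineSpan k (Set.range p) = ⊤) :
    finrank k (LinearMap.range (evalFamilyₗ k p)) = finrank k V + 1 := by
  rw [LinearMap.finrank_range_of_inj (evalFamilyₗ_injective hp), finrank_eq, finrank_self,
    mul_one]

end AffineMap

namespace IsGale

variable {n d m : ℕ} {a : Fin n → Fin d → ℚ} {g : Fin n → Fin m → ℚ}

theorem sum_smul_eq_zero (hG : IsGale a g) (f : (Fin d → ℚ) →ᵃ[ℚ] ℚ) :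
    ∑ i, f (a i) • g i = 0 := by
  obtain ⟨-, -, hsum, horth⟩ := hG
  funext k
  have hcomb : ∑ i, g i k • a i = 0 := funext fun j => by simpa [mul_comm] using horth k j
  have hf : ∀ x, f x = f.linear x + f 0 := fun x => by simpa using f.map_vadd 0 x
  calc (∑ i, f (a i) • g i) k = ∑ i, g i k * (f.linear (a i) + f 0) := by
        simp only [Finset.sum_apply, Pi.smul_apply, smul_eq_mul]
        exact sum_congr rfl fun i _ => by rw [hf, mul_comm]
    _ = f.linear (∑ i, g i k • a i) + (∑ i, g i k) * f 0 := by
      simp only [map_sum, map_smul, smul_eq_mul, mul_add, sum_add_distrib, sum_mul]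
    _ = 0 := by simp [hcomb, hsum k]

theorem finrank_span_range (hG : IsGale a g) :
    finrank ℚ (Submodule.span ℚ (Set.range g)) = m := by
  have h := LinearIndependent.rank_matrix (M := (Matrix.of g).transpose) hG.2.1
  rwa [Matrix.rank_transpose, Matrix.rank_eq_finrank_span_row, Fintype.card_fin] at h

theorem range_evalFamilyₗ (hG : IsGale a g) (hspan : affineSpan ℚ (Set.range a) = ⊤) :
    LinearMap.range (AffineMap.evalFamilyₗ ℚ a) =
      LinearMap.ker (Fintype.linearCombination ℚ g) := by
  refine Submodule.eq_of_le_of_finrank_le ?_ ?_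
  · rintro _ ⟨f, rfl⟩
    exact hG.sum_smul_eq_zero f
  · have h := LinearMap.finrank_range_add_finrank_ker (Fintype.linearCombination ℚ g)
    rw [Fintype.range_linearCombination, hG.finrank_span_range, finrank_fin_fun] at h
    rw [AffineMap.finrank_range_evalFamilyₗ hspan, finrank_fin_fun]
    have hmn := hG.1
    omega

end IsGale

/-- The points `{a i : i ∈ I}` lie in a common (proper) face of `conv(A)` — the zero
set of an affine function nonnegative on the configuration and positive somewhere —
iff `0` lies in the convex hull of `{g j : j ∉ I}`. -/
theorem stmt3 {n d m : ℕ} (a : Fin n → Fin d → ℚ) (g : Fin n → Fin m → ℚ)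
    (hGale : IsGale a g) (hspan : affineSpan ℚ (Set.range a) = ⊤) (I : Set (Fin n)) :
    (∃ f : (Fin d → ℚ) →ᵃ[ℚ] ℚ, (∀ i, 0 ≤ f (a i)) ∧ (∃ i, 0 < f (a i)) ∧
      ∀ i ∈ I, f (a i) = 0) ↔
    (0 : Fin m → ℚ) ∈ convexHull ℚ (g '' {j | j ∉ I}) := by
  rw [zero_mem_convexHull_image_iff]
  constructor
  · rintro ⟨f, hf₀, hfpos, hfI⟩
    exact ⟨fun i => f (a i), hf₀, hfpos, fun i hi => hfI i (not_not.1 hi),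
      hGale.sum_smul_eq_zero f⟩
  · rintro ⟨w, hw₀, hwpos, hwI, hwg⟩
    obtain ⟨f, rfl⟩ : w ∈ LinearMap.range (AffineMap.evalFamilyₗ ℚ a) := by
      rw [hGale.range_evalFamilyₗ hspan]
      exact hwg
    exact ⟨f, hw₀, hwpos, fun i hi => hwI i (not_not.2 hi)⟩
end

section
/- A vector configuration g_1,...,g_n spanning ℚ^d is positively 2-spanning if and only if the Gale dual point configuration a_1,...,a_n in ℚ^(n-d-1) is the vertex set (without repetitions) of a convex polytope, i.e., no a_j lies in the convex hull of the other points. -/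
/-! The values `(f (g i))ᵢ` of the linear functionals `f` on the configuration `g` form the row
space of `g`; by the Gale conditions and a dimension count this is exactly the space of affine
dependences `∑ vᵢ = 0, ∑ vᵢ • aᵢ = 0` of `a`. Hence `g` is positively 2-spanning iff every nonzero
affine dependence has two negative coefficients (the two positive ones come from `-v`). A nonzero
dependence whose only negative coefficient is `v j` writes `a j` as the convex combination
`∑_{i ≠ j} (vᵢ / -v j) • aᵢ`, and conversely a convex combination `a j = ∑ wᵢ • aᵢ` of the other
points gives the dependence `w - e_j`, negative only at `j`. -/

open Finset Module Function

section AffineDependences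

variable {K ι E : Type*} [Field K] [Fintype ι] [AddCommGroup E] [Module K E]

variable (K) in
def affineDependences (a : ι → E) : Submodule K (ι → K) :=
  LinearMap.ker ((Fintype.linearCombination K fun _ ↦ (1 : K)).prod (Fintype.linearCombination K a))

theorem mem_affineDependences {a : ι → E} {v : ι → K} :
    v ∈ affineDependences K a ↔ ∑ i, v i = 0 ∧ ∑ i, v i • a i = 0 := by
  simp [affineDependences, Fintype.linearCombination_apply]

theorem finrank_affineDependences_add [FiniteDimensional K E] {a : ι → E}
    (ha : affineSpan K (Set.range a) = ⊤) :
    finrank K (affineDependences K a) + (finrank K E + 1) = Fintype.card ι := by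
  set T := (Fintype.linearCombination K fun _ ↦ (1 : K)).prod (Fintype.linearCombination K a)
  have hbary : ∀ x, ((1 : K), x) ∈ LinearMap.range T := fun x ↦ by
    obtain ⟨w, hw, rfl⟩ := eq_affineCombination_of_mem_affineSpan_of_fintype
      (ha ▸ AffineSubspace.mem_top K E x)
    exact ⟨w, by simp [T, Fintype.linearCombination_apply, hw]⟩
  have hsurj : LinearMap.range T = ⊤ := Submodule.eq_top_iff'.2 fun ⟨t, x⟩ ↦ by
    have : (t, x) = ((1 : K), x) + (t - 1) • ((1 : K), (0 : E)) := by ext <;> simp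
    exact this ▸ add_mem (hbary x) (Submodule.smul_mem _ _ (hbary 0))
  have := T.finrank_range_add_finrank_ker
  rw [hsurj, finrank_top, finrank_prod, finrank_self, finrank_fintype_fun_eq_card] at this
  change finrank K (LinearMap.ker T) + _ = _
  omega

theorem span_eq_affineDependences [FiniteDimensional K E] {κ : Type*} [Fintype κ] {a : ι → E}
    {r : κ → ι → K} (hr : LinearIndependent K r) (hmem : ∀ k, r k ∈ affineDependences K a)
    (hcard : Fintype.card κ + (finrank K E + 1) = Fintype.card ι)
    (ha : affineSpan K (Set.range a) = ⊤) :
    Submodule.span K (Set.range r) = affineDependences K a := by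
  refine Submodule.eq_of_le_of_finrank_le (Submodule.span_le.2 ?_) ?_
  · rintro _ ⟨k, rfl⟩
    exact hmem k
  · rw [finrank_span_eq_card hr]
    have := finrank_affineDependences_add ha
    omega

end AffineDependences

section ConvexHull

variable {K ι E : Type*} [Field K] [LinearOrder K] [IsStrictOrderedRing K] [Fintype ι]
  [AddCommGroup E] [Module K E]

theorem exists_weights_of_mem_convexHull_image {a : ι → E} {t : Set ι} {x : E}
    (hx : x ∈ convexHull K (a '' t)) :
    ∃ w : ι → K, (∀ i, 0 ≤ w i) ∧ (∀ i ∉ t, w i = 0) ∧ ∑ i, w i = 1 ∧ ∑ i, w i • a i = x := by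
  classical
  set F := Fintype.linearCombination K a
  have hbasis : a '' t = F '' ((fun i ↦ Pi.single i 1) '' t) := by
    rw [Set.image_image]
    simp [F, Fintype.linearCombination_apply_single]
  rw [hbasis, ← F.image_convexHull] at hx
  obtain ⟨w, hw, rfl⟩ := hx
  have hsub : convexHull K ((fun i ↦ Pi.single i (1 : K)) '' t) ⊆
      stdSimplex K ι ∩ (tᶜ).pi fun _ ↦ {0} := by
    refine convexHull_min ?_
      ((convex_stdSimplex K ι).inter (convex_pi fun _ _ ↦ convex_singleton 0))
    rintro _ ⟨i, hi, rfl⟩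
    refine ⟨⟨fun j ↦ ?_, by simp⟩, fun j hj ↦ ?_⟩
    · by_cases h : j = i <;> simp [h]
    · simp [show j ≠ i by rintro rfl; exact hj hi]
  obtain ⟨⟨hw0, hw1⟩, hwt⟩ := hsub hw
  exact ⟨w, hw0, hwt, hw1, (Fintype.linearCombination_apply K a w).symm⟩

theorem mem_convexHull_image_ne_of_mem_affineDependences [DecidableEq ι] {a : ι → E} {v : ι → K}
    (hv : v ∈ affineDependences K a) {j : ι} (hj : v j < 0) (hnn : ∀ i ≠ j, 0 ≤ v i) :
    a j ∈ convexHull K (a '' {i | i ≠ j}) := by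
  obtain ⟨hsum, hcomb⟩ := mem_affineDependences.1 hv
  have hsum' : ∑ i ∈ univ.erase j, v i = -v j := by
    rw [← add_sum_erase _ _ (mem_univ j)] at hsum
    linear_combination hsum
  have hcomb' : ∑ i ∈ univ.erase j, v i • a i = -v j • a j := by
    rw [← add_sum_erase _ _ (mem_univ j)] at hcomb
    rw [neg_smul, eq_neg_iff_add_eq_zero, add_comm, hcomb]
  have := (univ.erase j).centerMass_mem_convexHull (z := a) (fun i hi ↦ hnn i (ne_of_mem_erase hi))
    (by linarith) fun i hi ↦ Set.mem_image_of_mem a (ne_of_mem_erase hi)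
  rwa [centerMass, hsum', hcomb', smul_smul, inv_mul_cancel₀ (by linarith), one_smul] at this

theorem forall_notMem_convexHull_image_ne_iff {a : ι → E} :
    (∀ j, a j ∉ convexHull K (a '' {i | i ≠ j})) ↔
      ∀ v ∈ affineDependences K a, v ≠ 0 → ∃ i j, i ≠ j ∧ v i < 0 ∧ v j < 0 := by
  classical
  constructor
  · intro hV v hv hv0
    by_contra! htwo
    obtain ⟨j, hj⟩ | hnn := em (∃ j, v j < 0)
    · exact hV j (mem_convexHull_image_ne_of_mem_affineDependences hv hj
        fun i hi ↦ htwo j i hi.symm hj)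
    · push Not at hnn
      exact hv0 (funext fun i ↦ (sum_eq_zero_iff_of_nonneg fun i _ ↦ hnn i).1
        (mem_affineDependences.1 hv).1 i (mem_univ i))
  · intro htwo j hj
    obtain ⟨w, hw0, hwj, hw1, hwa⟩ := exists_weights_of_mem_convexHull_image hj
    have hwj : w j = 0 := hwj j (by simp)
    set v := w - Pi.single j 1
    have hv : v ∈ affineDependences K a := mem_affineDependences.2
      ⟨by simp [v, sum_sub_distrib, hw1], by simp [v, sub_smul, sum_sub_distrib, hwa]⟩
    have hneg : ∀ i, v i < 0 → i = j := fun i hi ↦ by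
      by_contra h
      simp only [v, Pi.sub_apply, Pi.single_eq_of_ne h, sub_zero] at hi
      exact (hw0 i).not_gt hi
    obtain ⟨i, i', hne, hi, hi'⟩ := htwo v hv fun h ↦ by simpa [v, hwj] using congrFun h j
    exact hne ((hneg i hi).trans (hneg i' hi').symm)

end ConvexHull

theorem mem_span_range_swap_iff {K ι κ : Type*} [Field K] [Fintype κ] {g : ι → κ → K}
    {v : ι → K} :
    v ∈ Submodule.span K (Set.range (swap g)) ↔ ∃ f : (κ → K) →ₗ[K] K, ∀ i, f (g i) = v i := by
  classical
  rw [Submodule.mem_span_range_iff_exists_fun]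
  constructor
  · rintro ⟨c, rfl⟩
    exact ⟨Fintype.linearCombination K c, fun i ↦ by
      simp [Fintype.linearCombination_apply, mul_comm]⟩
  · rintro ⟨f, hf⟩
    refine ⟨fun k ↦ f fun j ↦ if k = j then 1 else 0, funext fun i ↦ ?_⟩
    simp [← hf, f.pi_apply_eq_sum_univ (g i), mul_comm]

theorem pos2Span_iff_of_span_eq_top {ι κ : Type*} [Fintype κ] {g : ι → κ → ℚ}
    (hspan : Submodule.span ℚ (Set.range g) = ⊤) :
    Pos2Span g ↔ ∀ v ∈ Submodule.span ℚ (Set.range (swap g)), v ≠ 0 →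
      (∃ i j, i ≠ j ∧ 0 < v i ∧ 0 < v j) ∧ (∃ i j, i ≠ j ∧ v i < 0 ∧ v j < 0) := by
  constructor
  · intro h v hv hv0
    obtain ⟨f, hf⟩ := mem_span_range_swap_iff.1 hv
    obtain rfl : (fun i ↦ f (g i)) = v := funext hf
    exact h f fun hf0 ↦ hv0 (by subst hf0; rfl)
  · intro h f hf
    exact h _ (mem_span_range_swap_iff.2 ⟨f, fun _ ↦ rfl⟩) fun h0 ↦
      hf (LinearMap.ext_on_range hspan fun i ↦ congrFun h0 i)

/-- A spanning vector configuration `g` (with zero sum, as part of Gale duality) is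
positively 2-spanning iff the Gale dual point configuration `a` is the vertex set,
without repetitions, of a convex polytope: no `a j` lies in the convex hull of the
other points. -/
theorem stmt4 {n d m : ℕ} (g : Fin n → Fin d → ℚ) (a : Fin n → Fin m → ℚ)
    (hGale : IsGale a g) (hspan : Submodule.span ℚ (Set.range g) = ⊤)
    (haff : affineSpan ℚ (Set.range a) = ⊤) :
    Pos2Span g ↔ ∀ j, a j ∉ convexHull ℚ (a '' {i | i ≠ j}) := by
  obtain ⟨hcard, hli, hsum, horth⟩ := hGale
  have hrows : ∀ k, swap g k ∈ affineDependences ℚ a := fun k ↦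
    mem_affineDependences.2 ⟨hsum k, funext fun j ↦ by simpa [mul_comm] using horth k j⟩
  have hdep := span_eq_affineDependences hli hrows (by simpa using hcard) haff
  rw [pos2Span_iff_of_span_eq_top hspan, hdep, forall_notMem_convexHull_image_ne_iff]
  refine ⟨fun h v hv hv0 ↦ (h v hv hv0).2, fun h v hv hv0 ↦ ⟨?_, h v hv hv0⟩⟩
  obtain ⟨i, j, hij, hi, hj⟩ := h (-v) (neg_mem hv) (neg_ne_zero.2 hv0)
  exact ⟨i, j, hij, neg_neg_iff_pos.1 hi, neg_neg_iff_pos.1 hj⟩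
end

section
/- If a collection w_1,...,w_n of vectors in an s-dimensional ℚ-vector space is positively 2-spanning and spans the space, then either s = 0 or n ≥ s + 3. -/
open Finset Module

theorem exists_dual_ne_zero_forall_mem_apply_eq_zero {K ι V : Type*} [Field K]
    [AddCommGroup V] [Module K V] [FiniteDimensional K V] {w : ι → V} (t : Finset ι)
    (ht : #t < finrank K V) : ∃ f : V →ₗ[K] K, f ≠ 0 ∧ ∀ i ∈ t, f (w i) = 0 := by
  classical
  have hlt : Submodule.span K ((t.image w : Finset V) : Set V) < ⊤ :=
    span_lt_top_of_card_lt_finrank <| by simpa using card_image_le.trans_lt ht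
  obtain ⟨f, hf0, hf⟩ := Submodule.exists_dual_map_eq_bot_of_lt_top hlt inferInstance
  refine ⟨f, hf0, fun i hi => ?_⟩
  rw [← Submodule.mem_bot K, ← hf]
  exact Submodule.mem_map_of_mem (Submodule.subset_span (by simpa using ⟨i, hi, rfl⟩))

section
variable {ι V : Type*} [AddCommGroup V] [Module ℚ V] {w : ι → V}

theorem Pos2Span.four_le_card (h : Pos2Span w) {f : V →ₗ[ℚ] ℚ} (hf : f ≠ 0) {t : Finset ι}
    (ht : ∀ i, f (w i) ≠ 0 → i ∈ t) : 4 ≤ #t := by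
  classical
  obtain ⟨⟨i, j, hij, hi, hj⟩, ⟨k, l, hkl, hk, hl⟩⟩ := h f hf
  have hdisj : Disjoint ({i, j} : Finset ι) {k, l} := by
    simp only [disjoint_insert_left, disjoint_insert_right, disjoint_singleton, mem_insert,
      mem_singleton, not_or]
    refine ⟨⟨?_, ?_⟩, ?_, ?_⟩ <;> rintro rfl <;> linarith
  calc 4 = #({i, j} ∪ {k, l} : Finset ι) := by
        rw [card_union_of_disjoint hdisj, card_pair hij, card_pair hkl]
    _ ≤ #t := card_le_card <| by
        simp only [union_subset_iff, insert_subset_iff, singleton_subset_iff]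
        exact ⟨⟨ht i hi.ne', ht j hj.ne'⟩, ht k hk.ne, ht l hl.ne⟩

theorem Pos2Span.finrank_add_three_le_card [Fintype ι] [FiniteDimensional ℚ V]
    (h : Pos2Span w) (hV : 0 < finrank ℚ V) : finrank ℚ V + 3 ≤ Fintype.card ι := by
  classical
  by_contra! hcard
  obtain ⟨t, -, ht⟩ := exists_subset_card_eq (show Fintype.card ι - 3 ≤ #(univ : Finset ι) by
    simp)
  obtain ⟨f, hf0, hft⟩ :=
    exists_dual_ne_zero_forall_mem_apply_eq_zero (K := ℚ) (w := w) t (by omega)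
  have hsupp : ∀ i, f (w i) ≠ 0 → i ∈ tᶜ := fun i hi => mem_compl.2 fun hit => hi (hft i hit)
  have hfour := h.four_le_card hf0 hsupp
  rw [card_compl] at hfour
  omega
end

theorem stmt8_general {n s : ℕ} {V : Type*} [AddCommGroup V] [Module ℚ V]
    [FiniteDimensional ℚ V] (hs : Module.finrank ℚ V = s) (w : Fin n → V)
    (h2 : Pos2Span w) :
    s = 0 ∨ n ≥ s + 3 := by
  subst hs
  rcases (finrank ℚ V).eq_zero_or_pos with hV | hV
  · exact Or.inl hV
  · simpa using Or.inr (h2.finrank_add_three_le_card hV)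

/-- If a spanning collection of `n` vectors in an `s`-dimensional ℚ-vector space is
positively 2-spanning then either `s = 0` or `n ≥ s + 3`. -/
theorem stmt8 {n s : ℕ} {V : Type*} [AddCommGroup V] [Module ℚ V]
    [FiniteDimensional ℚ V] (hs : Module.finrank ℚ V = s) (w : Fin n → V)
    (h2 : Pos2Span w) (hspan : Submodule.span ℚ (Set.range w) = ⊤) :
    s = 0 ∨ n ≥ s + 3 :=
  stmt8_general hs w h2
end

section
/- If the vertices of a convex polygon in ℚ^2 with n ≥ 5 vertices (no three collinear) are taken as a point configuration, then its Gale transform is a positively 2-spanning configuration of n vectors in ℚ^(n-3) with zero sum, in which any n-3 vectors are linearly independent. -/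
/-!
Gale duality. For a linear functional `f`, the numbers `f (g i)` form an affine dependence of
the points `a i`, nonzero when `f ≠ 0`; conversely, by a dimension count, the linear dependences
of the `g i` are exactly the values `ℓ (a i) + c` of affine functions. An affine dependence of
points in convex position has at least two positive coefficients (otherwise the point with the
positive one is a convex combination of the others), and applying this to `f` and `-f` gives
positive 2-spanning. A dependence among `n - 3` of the `g i` is an affine function vanishing at
the three remaining points, which are not collinear, so it is zero.
-/

open Module Finset

section ConvexPosition

variable {ι 𝕜 E : Type*} [Fintype ι] [Field 𝕜] [LinearOrder 𝕜] [IsStrictOrderedRing 𝕜]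
  [AddCommGroup E] [Module 𝕜 E]

theorem mem_convexHull_of_affineDependence {p : ι → E} {y : ι → 𝕜} {j : ι} (hj : 0 < y j)
    (hy : ∀ i ≠ j, y i ≤ 0) (hsum : ∑ i, y i = 0) (hmom : ∑ i, y i • p i = 0) :
    p j ∈ convexHull 𝕜 (p '' {i | i ≠ j}) := by
  classical
  have hsum' : ∑ i ∈ univ.erase j, y i + ∑ i ∈ {j}, y i = 0 := by
    rw [sum_singleton, add_comm, add_sum_erase _ _ (mem_univ j), hsum]
  have hmom' : ∑ i ∈ univ.erase j, y i • p i + ∑ i ∈ {j}, y i • p i = 0 := by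
    rw [sum_singleton, add_comm, add_sum_erase _ (fun i => y i • p i) (mem_univ j), hmom]
  have hcenter := centerMass_of_sum_add_sum_eq_zero hsum' hmom'
  rw [centerMass_singleton _ _ hj.ne'] at hcenter
  rw [← hcenter]
  refine centerMass_mem_convexHull_of_nonpos _ (fun i hi => hy i (ne_of_mem_erase hi)) ?_
    (fun i hi => Set.mem_image_of_mem p (ne_of_mem_erase hi))
  rw [sum_singleton] at hsum'
  linarith

theorem ConvexIndependent.exists_pos_pos_of_affineDependence {p : ι → E}
    (hp : ConvexIndependent 𝕜 p) {y : ι → 𝕜} (hy : y ≠ 0) (hsum : ∑ i, y i = 0)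
    (hmom : ∑ i, y i • p i = 0) : ∃ i j, i ≠ j ∧ 0 < y i ∧ 0 < y j := by
  obtain ⟨j, -, hj⟩ := exists_pos_of_sum_zero_of_exists_nonzero y hsum
    (by simpa [funext_iff] using hy)
  by_contra! h
  exact (hp.mem_convexHull_iff _ j).1
    (mem_convexHull_of_affineDependence hj (fun i hi => h j i hi.symm hj) hsum hmom) rfl

end ConvexPosition

section Collinear

variable {K V : Type*} [Field K] [AddCommGroup V] [Module K V] [FiniteDimensional K V]

theorem collinear_of_forall_apply_eq (hV : finrank K V ≤ 2) {ℓ : Dual K V} (hℓ : ℓ ≠ 0)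
    {s : Set V} {c : K} (hs : ∀ x ∈ s, ℓ x = c) : Collinear K s := by
  have hrange : finrank K (LinearMap.range ℓ) ≠ 0 := by
    rwa [Ne, Submodule.finrank_eq_zero, LinearMap.range_eq_bot]
  have hker : finrank K (LinearMap.ker ℓ) ≤ 1 := by
    have := ℓ.finrank_range_add_finrank_ker
    omega
  have hspan : vectorSpan K s ≤ LinearMap.ker ℓ := by
    refine Submodule.span_le.2 ?_
    rintro _ ⟨x, hx, y, hy, rfl⟩
    simp [hs x hx, hs y hy]
  exact collinear_iff_finrank_le_one.2 ((Submodule.finrank_mono hspan).trans hker)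

theorem eq_zero_of_not_collinear (hV : finrank K V ≤ 2) {p q r : V}
    (hpqr : ¬ Collinear K {p, q, r}) {ℓ : Dual K V} {c : K} (hp : ℓ p + c = 0)
    (hq : ℓ q + c = 0) (hr : ℓ r + c = 0) : (ℓ, c) = 0 := by
  have hℓ : ℓ = 0 := by
    by_contra hℓ
    refine hpqr (collinear_of_forall_apply_eq hV hℓ (c := -c) ?_)
    rintro x (rfl | rfl | rfl) <;> exact eq_neg_of_add_eq_zero_left ‹_›
  exact Prod.ext hℓ (by simpa [hℓ] using hp)

end Collinear

/-- The range is the row space of the matrix `Ã` with columns `(a i, 1)`. -/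
def affineEval {ι V : Type*} (K : Type*) [Field K] [AddCommGroup V] [Module K V] (a : ι → V) :
    (Dual K V × K) →ₗ[K] (ι → K) :=
  LinearMap.pi fun i => (Dual.eval K V (a i)).coprod LinearMap.id

@[simp]
theorem affineEval_apply {ι K V : Type*} [Field K] [AddCommGroup V] [Module K V] (a : ι → V)
    (ℓ : Dual K V) (c : K) (i : ι) : affineEval K a (ℓ, c) i = ℓ (a i) + c :=
  rfl

namespace IsGale

variable {n d m : ℕ} {a : Fin n → Fin d → ℚ} {g : Fin n → Fin m → ℚ}

theorem sum_eq_zero (h : IsGale a g) : ∑ i, g i = 0 := by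
  ext k
  simpa using h.2.2.1 k

theorem sum_coord_smul_eq_zero (h : IsGale a g) (j : Fin d) : ∑ i, a i j • g i = 0 := by
  ext k
  simpa using h.2.2.2 k j

theorem sum_dual_smul_eq_zero (h : IsGale a g) (ℓ : Dual ℚ (Fin d → ℚ)) :
    ∑ i, ℓ (a i) • g i = 0 := by
  simp_rw [fun i => ℓ.pi_apply_eq_sum_univ (a i), sum_smul, smul_eq_mul, mul_comm (a _ _),
    mul_smul]
  rw [sum_comm]
  simp_rw [← smul_sum, h.sum_coord_smul_eq_zero, smul_zero, sum_const_zero]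

theorem sum_dual_smul_point_eq_zero (h : IsGale a g) (f : Dual ℚ (Fin m → ℚ)) :
    ∑ i, f (g i) • a i = 0 := by
  ext j
  simpa [mul_comm] using congrArg f (h.sum_coord_smul_eq_zero j)

theorem span_range_eq_top (h : IsGale a g) : Submodule.span ℚ (Set.range g) = ⊤ := by
  refine Submodule.eq_top_of_finrank_eq ?_
  calc finrank ℚ (Submodule.span ℚ (Set.range g)) = (Matrix.of g).rank :=
        (Matrix.rank_eq_finrank_span_row _).symm
    _ = (Matrix.of g).transpose.rank := (Matrix.rank_transpose _).symm
    _ = finrank ℚ (Fin m → ℚ) := by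
      rw [Matrix.rank_eq_finrank_span_row, finrank_fin_fun]
      exact (finrank_span_eq_card h.2.1).trans (Fintype.card_fin m)

theorem pos2Span (h : IsGale a g) (ha : ConvexIndependent ℚ a) : Pos2Span g := by
  have hpos : ∀ f : Dual ℚ (Fin m → ℚ), f ≠ 0 → ∃ i j, i ≠ j ∧ 0 < f (g i) ∧ 0 < f (g j) := by
    intro f hf
    refine ha.exists_pos_pos_of_affineDependence (fun h0 => hf ?_) ?_
      (h.sum_dual_smul_point_eq_zero f)
    · exact LinearMap.ext_on_range h.span_range_eq_top fun i => congrFun h0 i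
    · rw [← map_sum, h.sum_eq_zero, map_zero]
  intro f hf
  obtain ⟨i, j, hij, hi, hj⟩ := hpos (-f) (neg_ne_zero.2 hf)
  exact ⟨hpos f hf, i, j, hij, neg_pos.1 hi, neg_pos.1 hj⟩

theorem mem_range_affineEval_of_sum_smul_eq_zero (h : IsGale a g)
    (ha : LinearMap.ker (affineEval ℚ a) = ⊥) {x : Fin n → ℚ}
    (hx : ∑ i, x i • g i = 0) : x ∈ LinearMap.range (affineEval ℚ a) := by
  have hle : LinearMap.range (affineEval ℚ a) ≤ LinearMap.ker (Fintype.linearCombination ℚ g) := by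
    rintro _ ⟨⟨ℓ, c⟩, rfl⟩
    simp [Fintype.linearCombination_apply, add_smul, sum_add_distrib, ← smul_sum,
      h.sum_dual_smul_eq_zero, h.sum_eq_zero]
  have hrange : finrank ℚ (LinearMap.range (affineEval ℚ a)) = d + 1 := by
    rw [LinearMap.finrank_range_of_inj (LinearMap.ker_eq_bot.1 ha), finrank_prod,
      Subspace.dual_finrank_eq, finrank_fin_fun, finrank_self]
  have hker : finrank ℚ (LinearMap.ker (Fintype.linearCombination ℚ g)) = d + 1 := by
    have := (Fintype.linearCombination ℚ g).finrank_range_add_finrank_ker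
    rw [Fintype.range_linearCombination, h.span_range_eq_top, finrank_top, finrank_fin_fun,
      finrank_fin_fun] at this
    have := h.1
    omega
  rw [Submodule.eq_of_le_of_finrank_eq hle (hrange.trans hker.symm)]
  simpa [Fintype.linearCombination_apply] using hx

theorem linearIndepOn (h : IsGale a g) {t : Set (Fin n)}
    (ht : ∀ v, (∀ i ∉ t, affineEval ℚ a v i = 0) → v = 0) : LinearIndepOn ℚ g t := by
  rw [linearIndepOn_iff]
  intro l hl hl0
  have hker : LinearMap.ker (affineEval ℚ a) = ⊥ :=
    LinearMap.ker_eq_bot'.2 fun v hv => ht v fun i _ => congrFun hv i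
  rw [Finsupp.linearCombination_apply, Finsupp.sum_fintype _ _ fun i => zero_smul ℚ (g i)] at hl0
  obtain ⟨v, hv⟩ := h.mem_range_affineEval_of_sum_smul_eq_zero hker hl0
  have hv0 : v = 0 := ht v fun i hi => by
    rw [hv]
    exact Finsupp.notMem_support_iff.1 fun hi' => hi (hl hi')
  ext i
  simpa [hv0] using (congrFun hv i).symm

end IsGale

theorem stmt16_general {n : ℕ} (a : Fin n → Fin 2 → ℚ)
    (g : Fin n → Fin (n - 3) → ℚ) (hGale : IsGale a g)
    (hconv : ∀ j, a j ∉ convexHull ℚ (a '' {i | i ≠ j}))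
    (hgen : ∀ i j k : Fin n, i ≠ j → j ≠ k → i ≠ k →
      ¬ Collinear ℚ ({a i, a j, a k} : Set (Fin 2 → ℚ))) :
    Pos2Span g ∧ (∑ i, g i = 0) ∧
      ∀ t : Finset (Fin n), t.card = n - 3 →
        LinearIndependent ℚ (fun i : ↥t => g i.1) := by
  have ha : ConvexIndependent ℚ a := convexIndependent_iff_notMem_convexHull_sdiff.2
    fun i s hi => hconv i (convexHull_mono (Set.image_mono fun j hj => hj.2) hi)
  refine ⟨hGale.pos2Span ha, hGale.sum_eq_zero, fun t ht => ?_⟩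
  obtain ⟨p, q, r, hpq, hpr, hqr, hcompl⟩ : ∃ p q r, p ≠ q ∧ p ≠ r ∧ q ≠ r ∧ tᶜ = {p, q, r} := by
    refine card_eq_three.1 ?_
    have := hGale.1
    rw [card_compl, ht, Fintype.card_fin]
    omega
  have hout : ∀ i ∈ ({p, q, r} : Finset (Fin n)), i ∉ t := fun i hi => mem_compl.1 (hcompl ▸ hi)
  exact hGale.linearIndepOn fun ⟨ℓ, c⟩ hv =>
    eq_zero_of_not_collinear (finrank_fin_fun ℚ).le (hgen p q r hpq hqr hpr)
      (hv p (hout p (by simp))) (hv q (hout q (by simp))) (hv r (hout r (by simp)))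

/-- The Gale transform of the vertex set of a convex polygon in `ℚ²` with `n ≥ 5`
vertices (no three collinear) is a positively 2-spanning configuration of `n` vectors
in `ℚ^(n-3)` with zero sum, in which any `n - 3` vectors are linearly independent. -/
theorem stmt16 {n : ℕ} (hn : 5 ≤ n) (a : Fin n → Fin 2 → ℚ)
    (g : Fin n → Fin (n - 3) → ℚ) (hGale : IsGale a g)
    (hconv : ∀ j, a j ∉ convexHull ℚ (a '' {i | i ≠ j}))
    (hgen : ∀ i j k : Fin n, i ≠ j → j ≠ k → i ≠ k →
      ¬ Collinear ℚ ({a i, a j, a k} : Set (Fin 2 → ℚ))) :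
    Pos2Span g ∧ (∑ i, g i = 0) ∧
      ∀ t : Finset (Fin n), t.card = n - 3 →
        LinearIndependent ℚ (fun i : ↥t => g i.1) :=
  stmt16_general a g hGale hconv hgen
end
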